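/- arXiv:math/0609585 — 5 statements merged into one kernel-verified Lean document; each statement's English description precedes it below -/
import Mathlib

section
/- For n = 2, the function S(x,y) = exp(-[(x/λ₁)^(γ₁/α) + (y/λ₂)^(γ₂/α)]^α) with 0 < α ≤ 1 satisfies the rectangle inequality S(x₂,y₂) - S(x₁,y₂) - S(x₂,y₁) + S(x₁,y₁) ≥ 0 for all 0 ≤ x₁ ≤ x₂ and 0 ≤ y₁ ≤ y₂, i.e., S is a valid bivariate survival function. -/
open Real Set

lemma convexOn_exp_neg : ConvexOn ℝ (Set.Ici (0:ℝ)) (fun u : ℝ => Real.exp (-u)) := by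
  refine ⟨convex_Ici 0, fun x _ y _ a b ha hb hab => ?_⟩
  have := convexOn_exp.2 (Set.mem_univ (-x)) (Set.mem_univ (-y)) ha hb hab
  simpa [smul_eq_mul, mul_comm, neg_add, mul_neg, add_comm] using this

lemma image_rpow_Ici {α : ℝ} (hα : 0 < α) :
    (fun t : ℝ => t ^ α) '' Set.Ici 0 = Set.Ici (0:ℝ) := by
  ext x
  constructor
  · rintro ⟨t, ht, rfl⟩
    exact Real.rpow_nonneg ht α
  · intro hx
    exact ⟨x ^ α⁻¹, Real.rpow_nonneg hx _, Real.rpow_inv_rpow hx hα.ne'⟩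

lemma convexOn_exp_neg_rpow {α : ℝ} (hα : 0 < α) (hα1 : α ≤ 1) :
    ConvexOn ℝ (Set.Ici (0:ℝ)) (fun t : ℝ => Real.exp (-t ^ α)) := by
  have hconc : ConcaveOn ℝ (Set.Ici (0:ℝ)) (fun t : ℝ => t ^ α) :=
    Real.concaveOn_rpow hα.le hα1
  have him := image_rpow_Ici hα
  have hg : ConvexOn ℝ ((fun t : ℝ => t ^ α) '' Set.Ici 0) (fun u : ℝ => Real.exp (-u)) := by
    rw [him]; exact convexOn_exp_neg
  have hanti : AntitoneOn (fun u : ℝ => Real.exp (-u)) ((fun t : ℝ => t ^ α) '' Set.Ici 0) :=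
    fun a _ b _ h => Real.exp_le_exp.2 (neg_le_neg h)
  exact hg.comp_concaveOn hconc hanti

lemma rect_of_convexOn {f : ℝ → ℝ} (hf : ConvexOn ℝ (Set.Ici (0:ℝ)) f)
    {a₁ a₂ b₁ b₂ : ℝ} (ha₁ : 0 ≤ a₁) (hb₁ : 0 ≤ b₁) (ha : a₁ ≤ a₂) (hb : b₁ ≤ b₂) :
    f (a₁ + b₂) + f (a₂ + b₁) ≤ f (a₁ + b₁) + f (a₂ + b₂) := by
  set d := (a₂ + b₂) - (a₁ + b₁) with hd
  rcases eq_or_lt_of_le (by linarith : (0:ℝ) ≤ d) with hd0 | hd0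
  · have h1 : a₂ = a₁ := by nlinarith
    have h2 : b₂ = b₁ := by nlinarith
    rw [h1, h2]
  · set s := (b₂ - b₁) / d with hs
    have hs0 : 0 ≤ s := div_nonneg (by linarith) hd0.le
    have hs1 : s ≤ 1 := by
      rw [div_le_one hd0]; linarith
    have hm : (a₁ + b₁) ∈ Set.Ici (0:ℝ) := by simp; linarith
    have hM : (a₂ + b₂) ∈ Set.Ici (0:ℝ) := by simp; linarith
    have hu := hf.2 hm hM (by linarith : (0:ℝ) ≤ 1 - s) hs0 (by ring)
    have hv := hf.2 hm hM hs0 (by linarith : (0:ℝ) ≤ 1 - s) (by ring)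
    have hsd : s * d = b₂ - b₁ := div_mul_cancel₀ _ hd0.ne'
    have e1 : (1 - s) • (a₁ + b₁) + s • (a₂ + b₂) = a₁ + b₂ := by
      simp only [smul_eq_mul]
      have : s * (a₂ + b₂) - s * (a₁ + b₁) = b₂ - b₁ := by rw [← hsd, hd]; ring
      linarith
    have e2 : s • (a₁ + b₁) + (1 - s) • (a₂ + b₂) = a₂ + b₁ := by
      simp only [smul_eq_mul]
      have : s * (a₂ + b₂) - s * (a₁ + b₁) = b₂ - b₁ := by rw [← hsd, hd]; ring
      linarith
    rw [e1] at hu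
    rw [e2] at hv
    have := add_le_add hu hv
    calc f (a₁ + b₂) + f (a₂ + b₁) ≤ ((1-s) * f (a₁+b₁) + s * f (a₂+b₂)) + (s * f (a₁+b₁) + (1-s) * f (a₂+b₂)) := by
          simpa [smul_eq_mul] using this
      _ = f (a₁ + b₁) + f (a₂ + b₂) := by ring

/-- The bivariate Weibull survival function
`S(x,y) = exp(-[(x/λ₁)^(γ₁/α) + (y/λ₂)^(γ₂/α)]^α)` with `0 < α ≤ 1` satisfies the
rectangle inequality `S(x₂,y₂) - S(x₁,y₂) - S(x₂,y₁) + S(x₁,y₁) ≥ 0`. -/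
theorem stmt_3 (α lam₁ lam₂ gam₁ gam₂ : ℝ)
    (hα : 0 < α) (hα1 : α ≤ 1) (hlam₁ : 0 < lam₁) (hlam₂ : 0 < lam₂)
    (hgam₁ : 0 < gam₁) (hgam₂ : 0 < gam₂)
    (x₁ x₂ y₁ y₂ : ℝ) (hx₁ : 0 ≤ x₁) (hx : x₁ ≤ x₂) (hy₁ : 0 ≤ y₁) (hy : y₁ ≤ y₂) :
    0 ≤ Real.exp (-((x₂ / lam₁) ^ (gam₁ / α) + (y₂ / lam₂) ^ (gam₂ / α)) ^ α)
      - Real.exp (-((x₁ / lam₁) ^ (gam₁ / α) + (y₂ / lam₂) ^ (gam₂ / α)) ^ α)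
      - Real.exp (-((x₂ / lam₁) ^ (gam₁ / α) + (y₁ / lam₂) ^ (gam₂ / α)) ^ α)
      + Real.exp (-((x₁ / lam₁) ^ (gam₁ / α) + (y₁ / lam₂) ^ (gam₂ / α)) ^ α) := by
  set a₁ := (x₁ / lam₁) ^ (gam₁ / α) with ha₁def
  set a₂ := (x₂ / lam₁) ^ (gam₁ / α) with ha₂def
  set b₁ := (y₁ / lam₂) ^ (gam₂ / α) with hb₁def
  set b₂ := (y₂ / lam₂) ^ (gam₂ / α) with hb₂def
  have ha₁ : 0 ≤ a₁ := Real.rpow_nonneg (div_nonneg hx₁ hlam₁.le) _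
  have hb₁ : 0 ≤ b₁ := Real.rpow_nonneg (div_nonneg hy₁ hlam₂.le) _
  have ha : a₁ ≤ a₂ :=
    Real.rpow_le_rpow (div_nonneg hx₁ hlam₁.le) (by gcongr) (le_of_lt (div_pos hgam₁ hα))
  have hb : b₁ ≤ b₂ :=
    Real.rpow_le_rpow (div_nonneg hy₁ hlam₂.le) (by gcongr) (le_of_lt (div_pos hgam₂ hα))
  have key := rect_of_convexOn (convexOn_exp_neg_rpow hα hα1) ha₁ hb₁ ha hb
  linarith
end

section
/- Under the change of variables x₁ = y₁^(α/γ₁) yₙ^(1/γ₁) λ₁, …, x_{n-1} = y_{n-1}^(α/γ_{n-1}) yₙ^(1/γ_{n-1}) λ_{n-1}, xₙ = (1 - y₁ - ⋯ - y_{n-1})^(α/γₙ) yₙ^(1/γₙ) λₙ, the absolute value of the Jacobian determinant ∂(x₁,…,xₙ)/∂(y₁,…,yₙ) equals α^(n-1) λ₁⋯λₙ y₁^(α/γ₁ - 1) ⋯ y_{n-1}^(α/γ_{n-1} - 1) (1 - y₁ - ⋯ - y_{n-1})^(α/γₙ - 1) yₙ^(1/γ₁ + ⋯ + 1/γₙ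 - 1) / (γ₁⋯γₙ). -/
open Finset

private lemma rpow_finset_sum {x : ℝ} (hx : 0 < x) {ι : Type*} (s : Finset ι) (f : ι → ℝ) :
    x ^ (∑ i ∈ s, f i) = ∏ i ∈ s, x ^ f i := by
  induction s using Finset.cons_induction with
  | empty => simp
  | cons a s ha ih => rw [Finset.sum_cons, Finset.prod_cons, Real.rpow_add hx, ih]

/-- The Jacobian determinant of the change of variables
`xᵢ = yᵢ^(α/γᵢ) yₙ^(1/γᵢ) λᵢ` (for `i < n`) and
`xₙ = (1-y₁-⋯-y_{n-1})^(α/γₙ) yₙ^(1/γₙ) λₙ`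
equals `α^(n-1) (∏λ/γ) ∏ yᵢ^(α/γᵢ-1) (1-∑y)^(α/γₙ-1) yₙ^(∑1/γ - 1)`.
Here the matrix is indexed by `Fin n ⊕ Unit`, with `Fin n` the first `n-1`
coordinates and `Unit` the last. -/
theorem stmt_5 (n : ℕ) (α : ℝ) (lam gam : Fin n → ℝ) (lamN gamN : ℝ)
    (y : Fin n → ℝ) (yN : ℝ)
    (hα : 0 < α) (hlam : ∀ i, 0 < lam i) (hgam : ∀ i, 0 < gam i)
    (hlamN : 0 < lamN) (hgamN : 0 < gamN)
    (hy : ∀ i, 0 < y i) (hyN : 0 < yN) (hsum : ∑ i, y i < 1) :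
    |(Matrix.of (fun i j : Fin n ⊕ Unit =>
        match i, j with
        | Sum.inl i, Sum.inl j =>
            if i = j then α * lam i * y i ^ (α / gam i - 1) * yN ^ (1 / gam i) / gam i
            else 0
        | Sum.inl i, Sum.inr _ =>
            lam i * y i ^ (α / gam i) * yN ^ (1 / gam i - 1) / gam i
        | Sum.inr _, Sum.inl _ =>
            -(α * lamN * (1 - ∑ k, y k) ^ (α / gamN - 1) * yN ^ (1 / gamN) / gamN)
        | Sum.inr _, Sum.inr _ =>
            lamN * (1 - ∑ k, y k) ^ (α / gamN) * yN ^ (1 / gamN - 1) / gamN)).det| =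
      α ^ n * ((∏ i, lam i) * lamN) *
        (∏ i, y i ^ (α / gam i - 1)) * (1 - ∑ i, y i) ^ (α / gamN - 1) *
        yN ^ (∑ i, 1 / gam i + 1 / gamN - 1) / ((∏ i, gam i) * gamN) := by
  have hS : (0:ℝ) < 1 - ∑ i, y i := sub_pos.mpr hsum
  set S : ℝ := 1 - ∑ i, y i with hSdef
  set d : Fin n → ℝ := fun i =>
    α * lam i * y i ^ (α / gam i - 1) * yN ^ (1 / gam i) / gam i with hd
  have hdpos : ∀ i, 0 < d i := fun i => by
    have h1 := Real.rpow_pos_of_pos (hy i) (α / gam i - 1)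
    have h2 := Real.rpow_pos_of_pos hyN (1 / gam i)
    have h3 := hlam i
    have h4 := hgam i
    have : d i = α * lam i * y i ^ (α / gam i - 1) * yN ^ (1 / gam i) / gam i := rfl
    rw [this]
    positivity
  set B : Matrix (Fin n) Unit ℝ :=
    Matrix.of (fun i _ => lam i * y i ^ (α / gam i) * yN ^ (1 / gam i - 1) / gam i) with hB
  set C : Matrix Unit (Fin n) ℝ :=
    Matrix.of (fun _ _ => -(α * lamN * S ^ (α / gamN - 1) * yN ^ (1 / gamN) / gamN)) with hC
  set D : Matrix Unit Unit ℝ :=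
    Matrix.of (fun _ _ => lamN * S ^ (α / gamN) * yN ^ (1 / gamN - 1) / gamN) with hD
  have hM : (Matrix.of (fun i j : Fin n ⊕ Unit =>
        match i, j with
        | Sum.inl i, Sum.inl j =>
            if i = j then α * lam i * y i ^ (α / gam i - 1) * yN ^ (1 / gam i) / gam i
            else 0
        | Sum.inl i, Sum.inr _ =>
            lam i * y i ^ (α / gam i) * yN ^ (1 / gam i - 1) / gam i
        | Sum.inr _, Sum.inl _ =>
            -(α * lamN * (1 - ∑ k, y k) ^ (α / gamN - 1) * yN ^ (1 / gamN) / gamN)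
        | Sum.inr _, Sum.inr _ =>
            lamN * (1 - ∑ k, y k) ^ (α / gamN) * yN ^ (1 / gamN - 1) / gamN)) =
      Matrix.fromBlocks (Matrix.diagonal d) B C D := by
    ext (i | i) (j | j) <;>
      simp [Matrix.fromBlocks, Matrix.diagonal, d, B, C, D, hSdef]
  haveI : Invertible (Matrix.diagonal d) :=
    ⟨Matrix.diagonal fun i => (d i)⁻¹,
      by rw [Matrix.diagonal_mul_diagonal]
         simp [funext fun i => inv_mul_cancel₀ (hdpos i).ne'],
      by rw [Matrix.diagonal_mul_diagonal]
         simp [funext fun i => mul_inv_cancel₀ (hdpos i).ne']⟩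
  rw [hM, Matrix.det_fromBlocks₁₁, Matrix.det_diagonal]
  have hinv : (⅟ (Matrix.diagonal d) : Matrix (Fin n) (Fin n) ℝ) =
      Matrix.diagonal fun i => (d i)⁻¹ :=
    invOf_eq_right_inv (by
      rw [Matrix.diagonal_mul_diagonal]
      simp [funext fun i => mul_inv_cancel₀ (hdpos i).ne'])
  rw [hinv]
  have hscalar : (D - C * Matrix.diagonal (fun i => (d i)⁻¹) * B).det =
      lamN * S ^ (α / gamN - 1) * yN ^ (1 / gamN - 1) / gamN := by
    rw [Matrix.det_unique]
    simp only [Matrix.sub_apply, Matrix.mul_apply, Matrix.diagonal_apply, Finset.sum_ite_eq,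
      Fintype.sum_unique, hB, hC, hD, Matrix.of_apply]
    have hterm : ∀ i, (∑ j, (-(α * lamN * S ^ (α / gamN - 1) * yN ^ (1 / gamN) / gamN)) *
          (if j = i then (d j)⁻¹ else 0)) *
          (lam i * y i ^ (α / gam i) * yN ^ (1 / gam i - 1) / gam i) =
        -(lamN * S ^ (α / gamN - 1) * yN ^ (1 / gamN - 1) / gamN) * y i := by
      intro i
      simp only [mul_ite, mul_zero, Finset.sum_ite_eq', Finset.mem_univ, if_true]
      have h1 : y i ^ (α / gam i) = y i ^ (α / gam i - 1) * y i := by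
        rw [← Real.rpow_add_one (hy i).ne']; ring_nf
      have h2 : yN ^ (1 / gam i - 1) = yN ^ (1 / gam i) / yN := by
        rw [Real.rpow_sub hyN, Real.rpow_one]
      have h3 : yN ^ (1 / gamN - 1) = yN ^ (1 / gamN) / yN := by
        rw [Real.rpow_sub hyN, Real.rpow_one]
      rw [h1, h2, h3]
      set a := y i ^ (α / gam i - 1) with ha
      set b := yN ^ (1 / gam i) with hb
      set c := S ^ (α / gamN - 1) with hc
      set e := yN ^ (1 / gamN) with he
      have hdi : (d i) = α * lam i * a * b / gam i := rfl
      rw [hdi]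
      have ha0 : a ≠ 0 := (ha ▸ Real.rpow_pos_of_pos (hy i) _).ne'
      have hb0 : b ≠ 0 := (hb ▸ Real.rpow_pos_of_pos hyN _).ne'
      have hg0 : gam i ≠ 0 := (hgam i).ne'
      have hgN0 : gamN ≠ 0 := hgamN.ne'
      have hl0 : lam i ≠ 0 := (hlam i).ne'
      have hyN0 : yN ≠ 0 := hyN.ne'
      field_simp
    rw [Finset.sum_congr rfl (fun i _ => hterm i), ← Finset.mul_sum]
    have hSa : S ^ (α / gamN) = S ^ (α / gamN - 1) * S := by
      rw [← Real.rpow_add_one hS.ne']; ring_nf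
    rw [hSa, hSdef]
    ring
  rw [hscalar]
  have hprod : ∏ i, d i =
      α ^ n * (∏ i, lam i) * (∏ i, y i ^ (α / gam i - 1)) * yN ^ (∑ i, 1 / gam i) /
        ∏ i, gam i := by
    rw [hd]
    rw [rpow_finset_sum hyN]
    simp only [Finset.prod_div_distrib, Finset.prod_mul_distrib, Finset.prod_const,
      Finset.card_univ, Fintype.card_fin]
  rw [hprod]
  have hyNs : yN ^ (∑ i, 1 / gam i) * yN ^ (1 / gamN - 1) =
      yN ^ (∑ i, 1 / gam i + 1 / gamN - 1) := by
    rw [← Real.rpow_add hyN]; congr 1; ring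
  have hpos : 0 < α ^ n * (∏ i, lam i) * (∏ i, y i ^ (α / gam i - 1)) *
      yN ^ (∑ i, 1 / gam i) / (∏ i, gam i) *
      (lamN * S ^ (α / gamN - 1) * yN ^ (1 / gamN - 1) / gamN) := by
    have h1 : 0 < ∏ i, lam i := Finset.prod_pos fun i _ => hlam i
    have h2 : 0 < ∏ i, y i ^ (α / gam i - 1) :=
      Finset.prod_pos fun i _ => Real.rpow_pos_of_pos (hy i) _
    have h3 : 0 < ∏ i, gam i := Finset.prod_pos fun i _ => hgam i
    have h4 := Real.rpow_pos_of_pos hyN (∑ i, 1 / gam i)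
    have h5 := Real.rpow_pos_of_pos hS (α / gamN - 1)
    have h6 := Real.rpow_pos_of_pos hyN (1 / gamN - 1)
    positivity
  rw [abs_of_pos hpos, ← hyNs, hSdef]
  field_simp
end

section
/- For the bivariate Weibull distribution with survival function S(x,y) = exp(-[(x/λ₁)^(γ₁/α) + (y/λ₂)^(γ₂/α)]^α), the mixed moment is E[X^{i}Y^{j}] = λ₁^{i} λ₂^{j} Γ(iα/γ₁ + 1) Γ(jα/γ₂ + 1) Γ(i/γ₁ + j/γ₂ + 1) / Γ(α(i/γ₁ + j/γ₂) + 1), for i, j ≥ 0. -/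
/-!
Substituting `x = λ₁ u^(α/γ₁)`, `y = λ₂ v^(α/γ₂)` makes the Jacobian cancel the algebraic
prefactor of the density, which becomes `φ''(u + v)` with `φ s = exp (-s ^ α)`; the moment is then
`λ₁^i λ₂^j ∫∫ u^a v^b φ''(u + v)` with `a = iα/γ₁`, `b = jα/γ₂`. Integrating over the segments
`u + v = s` gives the Beta factor `B(a+1, b+1) s^(a+b+1)` (Tonelli applies since `φ'' ≥ 0` for
`α ≤ 1`), and `∫ s^(a+b+1) φ''(s) ds` splits into two Gamma integrals, adding up to
`(a+b+1) Γ((a+b)/α + 1)`.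
-/

open MeasureTheory Set Real ProbabilityTheory

theorem lintegral_Ioo_rpow_mul_one_sub_rpow {a b : ℝ} (ha : -1 < a) (hb : -1 < b) :
    ∫⁻ x in Ioo 0 1, ENNReal.ofReal (x ^ a * (1 - x) ^ b) =
      ENNReal.ofReal (beta (a + 1) (b + 1)) := by
  have hB := beta_pos (α := a + 1) (β := b + 1) (by linarith) (by linarith)
  have h := lintegral_betaPDF_eq_one (α := a + 1) (β := b + 1) (by linarith) (by linarith)
  simp_rw [lintegral_betaPDF, add_sub_cancel_right, mul_assoc,
    ENNReal.ofReal_mul (one_div_pos.2 hB).le, lintegral_const_mul' _ _ ENNReal.ofReal_ne_top,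
    mul_comm (ENNReal.ofReal _)] at h
  rw [ENNReal.eq_inv_of_mul_eq_one_left h, one_div, ENNReal.ofReal_inv_of_pos hB, inv_inv]

theorem lintegral_Ioo_rpow_mul_sub_rpow {a b s : ℝ} (ha : -1 < a) (hb : -1 < b) (hs : 0 < s) :
    ∫⁻ u in Ioo 0 s, ENNReal.ofReal (u ^ a * (s - u) ^ b) =
      ENNReal.ofReal (s ^ (a + b + 1) * beta (a + 1) (b + 1)) := by
  have himage : (s * ·) '' Ioo 0 1 = Ioo 0 s := by simp [image_mul_left_Ioo hs]
  rw [← himage, lintegral_image_eq_lintegral_abs_deriv_mul measurableSet_Ioo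
      (fun x _ => (hasDerivAt_const_mul s).hasDerivWithinAt)
      (mul_right_injective₀ hs.ne').injOn,
    ENNReal.ofReal_mul (by positivity), ← lintegral_Ioo_rpow_mul_one_sub_rpow ha hb,
    ← lintegral_const_mul' _ _ ENNReal.ofReal_ne_top]
  refine setLIntegral_congr_fun measurableSet_Ioo fun x hx => ?_
  rw [abs_of_pos hs, ← ENNReal.ofReal_mul hs.le, ← ENNReal.ofReal_mul (by positivity)]
  congr 1
  rw [← mul_one_sub, mul_rpow hs.le hx.1.le, mul_rpow hs.le (by linarith [hx.2]),
    rpow_add hs, rpow_add hs, rpow_one]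
  ring

theorem lintegral_Ioi_Ioi_eq_lintegral_Ioi_Ioo (f : ℝ → ℝ → ENNReal)
    (hf : Measurable (Function.uncurry f)) :
    ∫⁻ u in Ioi 0, ∫⁻ v in Ioi 0, f u v = ∫⁻ s in Ioi 0, ∫⁻ u in Ioo 0 s, f u (s - u) := by
  set F : ℝ × ℝ → ENNReal :=
    {p | 0 < p.1 ∧ p.1 < p.2}.indicator fun p => f p.1 (p.2 - p.1)
  have hF : Measurable F :=
    (hf.comp (measurable_fst.prodMk (measurable_snd.sub measurable_fst))).indicator
      ((measurableSet_lt measurable_const measurable_fst).inter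
        (measurableSet_lt measurable_fst measurable_snd))
  have hshift (u : ℝ) : ∫⁻ v in Ioi 0, f u v = ∫⁻ s in Ioi u, f u (s - u) := by
    rw [← (measurePreserving_sub_right volume u).setLIntegral_comp_preimage measurableSet_Ioi
      hf.of_uncurry_left, preimage_sub_const_Ioi, zero_add]
  calc ∫⁻ u in Ioi 0, ∫⁻ v in Ioi 0, f u v = ∫⁻ u, ∫⁻ s, F (u, s) := by
        rw [← lintegral_indicator measurableSet_Ioi]
        congr 1 with u
        by_cases hu : 0 < u
        · rw [indicator_of_mem (mem_Ioi.2 hu), hshift, ← lintegral_indicator measurableSet_Ioi]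
          congr 1 with s
          simp [F, indicator, hu]
        · simp [F, indicator, hu]
    _ = ∫⁻ s, ∫⁻ u, F (u, s) := lintegral_lintegral_swap hF.aemeasurable
    _ = ∫⁻ s in Ioi 0, ∫⁻ u in Ioo 0 s, f u (s - u) := by
        rw [← lintegral_indicator measurableSet_Ioi]
        congr 1 with s
        by_cases hs : 0 < s
        · rw [indicator_of_mem (mem_Ioi.2 hs), ← lintegral_indicator measurableSet_Ioo]
          congr 1 with u
        · rw [indicator_of_notMem (show s ∉ Ioi 0 from hs), ← lintegral_zero]
          congr 1 with u
          simp only [F, indicator]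
          exact if_neg fun h => hs (h.1.trans h.2)

theorem lintegral_Ioi_Ioi_rpow_mul_rpow_mul_comp_add {a b : ℝ} (ha : -1 < a) (hb : -1 < b)
    {g : ℝ → ENNReal} (hg : Measurable g) :
    ∫⁻ u in Ioi 0, ∫⁻ v in Ioi 0, ENNReal.ofReal (u ^ a * v ^ b) * g (u + v) =
      ENNReal.ofReal (beta (a + 1) (b + 1)) *
        ∫⁻ s in Ioi 0, ENNReal.ofReal (s ^ (a + b + 1)) * g s := by
  rw [lintegral_Ioi_Ioi_eq_lintegral_Ioi_Ioo _ (by fun_prop),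
    ← lintegral_const_mul' _ _ ENNReal.ofReal_ne_top]
  refine setLIntegral_congr_fun measurableSet_Ioi fun s hs => ?_
  simp_rw [add_sub_cancel]
  rw [lintegral_mul_const _ (by fun_prop), lintegral_Ioo_rpow_mul_sub_rpow ha hb hs,
    ENNReal.ofReal_mul (rpow_nonneg (le_of_lt hs) _)]
  ring

theorem integral_Ioi_Ioi_rpow_mul_rpow_mul_comp_add {a b : ℝ} (ha : -1 < a) (hb : -1 < b)
    {g : ℝ → ℝ} (hg : Measurable g) (hg_nonneg : ∀ s ∈ Ioi 0, 0 ≤ g s)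
    (hg_int : IntegrableOn (fun s => s ^ (a + b + 1) * g s) (Ioi 0)) :
    ∫ u in Ioi 0, ∫ v in Ioi 0, u ^ a * v ^ b * g (u + v) =
      beta (a + 1) (b + 1) * ∫ s in Ioi 0, s ^ (a + b + 1) * g s := by
  set L : ℝ → ENNReal := fun u =>
    ∫⁻ v in Ioi 0, ENNReal.ofReal (u ^ a * v ^ b) * ENNReal.ofReal (g (u + v))
  have hL : Measurable L :=
    Measurable.lintegral_prod_right' (f := fun p : ℝ × ℝ =>
      ENNReal.ofReal (p.1 ^ a * p.2 ^ b) * ENNReal.ofReal (g (p.1 + p.2))) (by fun_prop)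
  have hinner : ∀ u ∈ Ioi (0 : ℝ), ∫ v in Ioi 0, u ^ a * v ^ b * g (u + v) = (L u).toReal := by
    rintro u (hu : 0 < u)
    rw [integral_eq_lintegral_of_nonneg_ae ?_ (by fun_prop)]
    · congr 1
      refine setLIntegral_congr_fun measurableSet_Ioi fun v (hv : 0 < v) => ?_
      rw [ENNReal.ofReal_mul (by positivity)]
    · exact ae_restrict_of_forall_mem measurableSet_Ioi fun v (hv : 0 < v) =>
        mul_nonneg (by positivity) (hg_nonneg _ (add_pos hu hv))
  have hB : 0 ≤ beta (a + 1) (b + 1) := (beta_pos (by linarith) (by linarith)).le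
  have hM : 0 ≤ ∫ s in Ioi 0, s ^ (a + b + 1) * g s :=
    setIntegral_nonneg measurableSet_Ioi fun s (hs : 0 < s) =>
      mul_nonneg (by positivity) (hg_nonneg s hs)
  have htotal : ∫⁻ u in Ioi 0, L u =
      ENNReal.ofReal (beta (a + 1) (b + 1) * ∫ s in Ioi 0, s ^ (a + b + 1) * g s) := by
    rw [lintegral_Ioi_Ioi_rpow_mul_rpow_mul_comp_add ha hb hg.ennreal_ofReal,
      ENNReal.ofReal_mul hB,
      ofReal_integral_eq_lintegral_ofReal hg_int]
    · congr 1
      refine setLIntegral_congr_fun measurableSet_Ioi fun s (hs : 0 < s) => ?_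
      rw [ENNReal.ofReal_mul (by positivity)]
    · exact ae_restrict_of_forall_mem measurableSet_Ioi fun s (hs : 0 < s) =>
        mul_nonneg (by positivity) (hg_nonneg s hs)
  rw [setIntegral_congr_fun measurableSet_Ioi hinner,
    integral_toReal hL.aemeasurable (ae_lt_top hL (htotal ▸ ENNReal.ofReal_ne_top)), htotal,
    ENNReal.toReal_ofReal (mul_nonneg hB hM)]

/-- `φ''` for `φ s = exp (-s ^ α)`. -/
noncomputable def weibullKernel (α s : ℝ) : ℝ :=
  exp (-s ^ α) * (α ^ 2 * s ^ (2 * α - 2) - α * (α - 1) * s ^ (α - 2))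

theorem measurable_weibullKernel (α : ℝ) : Measurable (weibullKernel α) := by
  unfold weibullKernel
  fun_prop

theorem weibullKernel_nonneg {α s : ℝ} (hα : 0 ≤ α) (hα1 : α ≤ 1) (hs : 0 ≤ s) :
    0 ≤ weibullKernel α s := by
  have : α * (α - 1) * s ^ (α - 2) ≤ 0 :=
    mul_nonpos_of_nonpos_of_nonneg (mul_nonpos_of_nonneg_of_nonpos hα (by linarith)) (by positivity)
  have : 0 ≤ α ^ 2 * s ^ (2 * α - 2) := by positivity
  exact mul_nonneg (exp_pos _).le (by linarith)

theorem rpow_mul_weibullKernel (α c : ℝ) {s : ℝ} (hs : 0 < s) :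
    s ^ (c + 1) * weibullKernel α s =
      α ^ 2 * (s ^ (c + 2 * α - 1) * exp (-s ^ α)) -
        α * (α - 1) * (s ^ (c + α - 1) * exp (-s ^ α)) := by
  rw [show c + 2 * α - 1 = (c + 1) + (2 * α - 2) by ring,
    show c + α - 1 = (c + 1) + (α - 2) by ring, rpow_add hs (c + 1), rpow_add hs (c + 1),
    weibullKernel]
  ring

theorem integrableOn_rpow_mul_weibullKernel {α c : ℝ} (hα : 0 < α) (hc : -α < c) :
    IntegrableOn (fun s => s ^ (c + 1) * weibullKernel α s) (Ioi 0) := by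
  have h₁ := integrableOn_rpow_mul_exp_neg_rpow (s := c + 2 * α - 1) (by linarith) hα
  have h₂ := integrableOn_rpow_mul_exp_neg_rpow (s := c + α - 1) (by linarith) hα
  exact IntegrableOn.congr_fun ((h₁.const_mul _).sub (h₂.const_mul _))
    (fun s hs => (rpow_mul_weibullKernel α c hs).symm) measurableSet_Ioi

theorem integral_rpow_mul_weibullKernel {α c : ℝ} (hα : 0 < α) (hc : -α < c) :
    ∫ s in Ioi 0, s ^ (c + 1) * weibullKernel α s = (c + 1) * Gamma (c / α + 1) := by
  have hc' : c / α + 1 ≠ 0 := by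
    have : -1 < c / α := by rwa [lt_div_iff₀ hα, neg_one_mul]
    linarith
  have h₁ := integrableOn_rpow_mul_exp_neg_rpow (s := c + 2 * α - 1) (by linarith) hα
  have h₂ := integrableOn_rpow_mul_exp_neg_rpow (s := c + α - 1) (by linarith) hα
  rw [setIntegral_congr_fun measurableSet_Ioi fun s hs => rpow_mul_weibullKernel α c hs,
    integral_sub (h₁.const_mul _) (h₂.const_mul _),
    integral_const_mul, integral_const_mul, integral_rpow_mul_exp_neg_rpow hα (by linarith),
    integral_rpow_mul_exp_neg_rpow hα (by linarith),
    show (c + 2 * α - 1 + 1) / α = c / α + 1 + 1 by field_simp; ring,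
    show (c + α - 1 + 1) / α = c / α + 1 by field_simp; ring, Gamma_add_one hc']
  field_simp
  ring

theorem integral_Ioi_Ioi_rpow_mul_rpow_mul_weibullKernel {α a b : ℝ} (hα : 0 < α) (hα1 : α ≤ 1)
    (ha : -1 < a) (hb : -1 < b) (hab : -α < a + b) :
    ∫ u in Ioi 0, ∫ v in Ioi 0, u ^ a * v ^ b * weibullKernel α (u + v) =
      Gamma (a + 1) * Gamma (b + 1) * Gamma ((a + b) / α + 1) / Gamma (a + b + 1) := by
  have hab1 : 0 < a + b + 1 := by linarith
  rw [integral_Ioi_Ioi_rpow_mul_rpow_mul_comp_add ha hb (measurable_weibullKernel α)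
      (fun s hs => weibullKernel_nonneg hα.le hα1 (le_of_lt hs))
      (integrableOn_rpow_mul_weibullKernel hα hab),
    integral_rpow_mul_weibullKernel hα hab, beta,
    show a + 1 + (b + 1) = (a + b + 1) + 1 by ring, Gamma_add_one hab1.ne']
  have := (Gamma_pos_of_pos hab1).ne'
  field_simp

theorem integral_Ioi_eq_integral_Ioi_comp_mul_rpow {E : Type*} [NormedAddCommGroup E]
    [NormedSpace ℝ E] (f : ℝ → E) {c p : ℝ} (hc : 0 < c) (hp : 0 < p) :
    ∫ y in Ioi 0, f y = ∫ v in Ioi 0, (c * p * v ^ (p - 1)) • f (c * v ^ p) := by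
  have hscale := integral_comp_mul_left_Ioi' f 0 hc
  rw [mul_zero] at hscale
  rw [← hscale, ← integral_comp_rpow_Ioi_of_pos hp (g := fun x => f (c * x)), ← integral_smul]
  simp_rw [smul_smul, mul_assoc]

/-- `∂²S/∂x∂y` for the survival function `S x y = exp (-((x/λ₁)^(γ₁/α) + (y/λ₂)^(γ₂/α))^α)`. -/
noncomputable def bivariateWeibullDensity (α lam₁ lam₂ gam₁ gam₂ x y : ℝ) : ℝ :=
  exp (-((x / lam₁) ^ (gam₁ / α) + (y / lam₂) ^ (gam₂ / α)) ^ α) *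
    (gam₁ * gam₂ / (lam₁ * lam₂ * α ^ 2)) *
    ((x / lam₁) ^ (gam₁ / α - 1) * (y / lam₂) ^ (gam₂ / α - 1)) *
    (α ^ 2 * ((x / lam₁) ^ (gam₁ / α) + (y / lam₂) ^ (gam₂ / α)) ^ (2 * α - 2) -
      α * (α - 1) * ((x / lam₁) ^ (gam₁ / α) + (y / lam₂) ^ (gam₂ / α)) ^ (α - 2))

theorem bivariateWeibullDensity_comp_rpow {α lam₁ lam₂ gam₁ gam₂ u v : ℝ} (hα : 0 < α)
    (hlam₁ : 0 < lam₁) (hlam₂ : 0 < lam₂) (hgam₁ : 0 < gam₁) (hgam₂ : 0 < gam₂)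
    (hu : 0 < u) (hv : 0 < v) :
    lam₁ * (α / gam₁) * u ^ (α / gam₁ - 1) * (lam₂ * (α / gam₂) * v ^ (α / gam₂ - 1) *
      bivariateWeibullDensity α lam₁ lam₂ gam₁ gam₂ (lam₁ * u ^ (α / gam₁))
        (lam₂ * v ^ (α / gam₂))) = weibullKernel α (u + v) := by
  have hsub {lam gam w : ℝ} (hlam : 0 < lam) (hgam : 0 < gam) (hw : 0 < w) :
      (lam * w ^ (α / gam) / lam) ^ (gam / α) = w ∧
        (lam * w ^ (α / gam) / lam) ^ (gam / α - 1) = (w ^ (α / gam - 1))⁻¹ := by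
    rw [mul_div_cancel_left₀ _ hlam.ne', ← rpow_mul hw.le, ← rpow_mul hw.le, ← rpow_neg hw.le]
    constructor
    · rw [div_mul_div_cancel₀' hα.ne', div_self hgam.ne', rpow_one]
    · congr 1
      field_simp
      ring
  obtain ⟨hu₁, hu₂⟩ := hsub hlam₁ hgam₁ hu
  obtain ⟨hv₁, hv₂⟩ := hsub hlam₂ hgam₂ hv
  have := (rpow_pos_of_pos hu (α / gam₁ - 1)).ne'
  have := (rpow_pos_of_pos hv (α / gam₂ - 1)).ne'
  rw [bivariateWeibullDensity, hu₁, hu₂, hv₁, hv₂, weibullKernel]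
  field_simp

theorem integral_rpow_mul_rpow_mul_bivariateWeibullDensity {α lam₁ lam₂ gam₁ gam₂ : ℝ}
    (hα : 0 < α) (hlam₁ : 0 < lam₁) (hlam₂ : 0 < lam₂) (hgam₁ : 0 < gam₁) (hgam₂ : 0 < gam₂)
    (i j : ℝ) :
    ∫ x in Ioi 0, ∫ y in Ioi 0, x ^ i * y ^ j * bivariateWeibullDensity α lam₁ lam₂ gam₁ gam₂ x y =
      lam₁ ^ i * lam₂ ^ j * ∫ u in Ioi 0, ∫ v in Ioi 0,
        u ^ (i * α / gam₁) * v ^ (j * α / gam₂) * weibullKernel α (u + v) := by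
  simp_rw [← integral_const_mul]
  refine (integral_Ioi_eq_integral_Ioi_comp_mul_rpow _ hlam₁ (div_pos hα hgam₁)).trans ?_
  refine setIntegral_congr_fun measurableSet_Ioi fun u (hu : 0 < u) => ?_
  rw [integral_Ioi_eq_integral_Ioi_comp_mul_rpow _ hlam₂ (div_pos hα hgam₂), ← integral_smul]
  refine setIntegral_congr_fun measurableSet_Ioi fun v (hv : 0 < v) => ?_
  rw [← bivariateWeibullDensity_comp_rpow hα hlam₁ hlam₂ hgam₁ hgam₂ hu hv,
    mul_rpow hlam₁.le (by positivity), mul_rpow hlam₂.le (by positivity), ← rpow_mul hu.le,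
    ← rpow_mul hv.le, smul_eq_mul, smul_eq_mul]
  ring_nf

/-- For the bivariate Weibull distribution with survival function
`S(x,y) = exp(-[(x/λ₁)^(γ₁/α) + (y/λ₂)^(γ₂/α)]^α)` and density `f = ∂²S/∂x∂y`, the
mixed moment is
`E[X^i Y^j] = λ₁^i λ₂^j Γ(iα/γ₁+1) Γ(jα/γ₂+1) Γ(i/γ₁+j/γ₂+1) / Γ(α(i/γ₁+j/γ₂)+1)`. -/
theorem stmt_15 (α lam₁ lam₂ gam₁ gam₂ i j : ℝ)
    (hα : 0 < α) (hα1 : α ≤ 1) (hlam₁ : 0 < lam₁) (hlam₂ : 0 < lam₂)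
    (hgam₁ : 0 < gam₁) (hgam₂ : 0 < gam₂) (hi : 0 ≤ i) (hj : 0 ≤ j) :
    ∫ x in Set.Ioi (0 : ℝ), ∫ y in Set.Ioi (0 : ℝ),
        x ^ i * y ^ j *
          (Real.exp (-((x / lam₁) ^ (gam₁ / α) + (y / lam₂) ^ (gam₂ / α)) ^ α) *
            (gam₁ * gam₂ / (lam₁ * lam₂ * α ^ 2)) *
            ((x / lam₁) ^ (gam₁ / α - 1) * (y / lam₂) ^ (gam₂ / α - 1)) *
            (α ^ 2 * ((x / lam₁) ^ (gam₁ / α) + (y / lam₂) ^ (gam₂ / α)) ^ (2 * α - 2) -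
              α * (α - 1) *
                ((x / lam₁) ^ (gam₁ / α) + (y / lam₂) ^ (gam₂ / α)) ^ (α - 2))) =
      lam₁ ^ i * lam₂ ^ j * Real.Gamma (i * α / gam₁ + 1) * Real.Gamma (j * α / gam₂ + 1) *
        Real.Gamma (i / gam₁ + j / gam₂ + 1) /
        Real.Gamma (α * (i / gam₁ + j / gam₂) + 1) := by
  change ∫ x in Ioi 0, ∫ y in Ioi 0,
      x ^ i * y ^ j * bivariateWeibullDensity α lam₁ lam₂ gam₁ gam₂ x y = _
  have ha : 0 ≤ i * α / gam₁ := by positivity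
  have hb : 0 ≤ j * α / gam₂ := by positivity
  rw [integral_rpow_mul_rpow_mul_bivariateWeibullDensity hα hlam₁ hlam₂ hgam₁ hgam₂,
    integral_Ioi_Ioi_rpow_mul_rpow_mul_weibullKernel hα hα1 (by linarith) (by linarith)
      (by linarith),
    show (i * α / gam₁ + j * α / gam₂) / α = i / gam₁ + j / gam₂ by field_simp,
    show i * α / gam₁ + j * α / gam₂ = α * (i / gam₁ + j / gam₂) by ring]
  ring
end

section
/- For any real α and natural n ≥ 1, summing over all set partitions π of {1,…,n}: Σ_π ∏_{B ∈ π} α^{(|B|)} (-c)^{(|π|)} = (-αc)^{(n)}, where x^{(m)} denotes the falling factorial. Equivalently, Σ_{k=1}^{n} C(n,k,α)(-c)^{(k)} = (-αc)^{(n)}, where C(n,k,α) = Σ_{π: |π|=k} ∏_{B∈π} α^{(|B|)} are the C-numbers of Charalambides. -/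
/-!
Induct on `s`. A partition of `insert a s` is obtained from a partition `P` of `s` in exactly
one way: either `{a}` is added as a new block, or `a` is added to a block `B` of `P`. The summand
`∏_{B} x^{(|B|)} y^{(|P|)}` is multiplied by `x (y - |P|)` in the first case and by `x - |B|` in
the second; as the block sizes add up to `|s|`, these factors sum to `x y - |s|`, which is exactly
the factor relating `(x y)^{(|s|)}` and `(x y)^{(|s| + 1)}`.
-/

open Finset Polynomial

namespace Finpartition

variable {ι : Type*} [DecidableEq ι] {s : Finset ι} {a : ι}

/-- Adds `a` to the block `B` of `P`; for `B = ∅` this adds the new block `{a}`. -/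
def insertIntoPart (P : Finpartition s) (ha : a ∉ s) {B : Finset ι}
    (hB : B ∈ insert ∅ P.parts) : Finpartition (insert a s) where
  parts := insert (insert a B) (P.parts.erase B)
  supIndep := by
    rw [supIndep_iff_pairwiseDisjoint, coe_insert]
    refine (P.disjoint.subset (coe_subset.mpr (erase_subset _ _))).insert fun C hC _ => ?_
    rw [mem_coe, mem_erase] at hC
    refine disjoint_insert_left.mpr ⟨fun h => ha (P.le hC.2 h), ?_⟩
    rcases mem_insert.mp hB with rfl | hB
    · exact disjoint_empty_left _
    · exact P.disjoint hB hC.2 (Ne.symm hC.1)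
  sup_parts := by
    rw [sup_insert, id, sup_eq_union, insert_union]
    congr 1
    rcases mem_insert.mp hB with rfl | hB
    · rw [empty_union, erase_eq_of_notMem P.empty_notMem_parts, P.sup_parts]
    · have h := P.sup_parts
      rwa [← insert_erase hB, sup_insert] at h
  bot_notMem h := by
    rcases mem_insert.mp h with h | h
    · exact insert_ne_empty a B h.symm
    · exact P.bot_notMem (mem_of_mem_erase h)

def avoidSingleton (Q : Finpartition (insert a s)) (ha : a ∉ s) : Finpartition s :=
  (Q.avoid {a}).copy (by rw [sdiff_singleton_eq_erase, erase_insert ha])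

lemma avoidSingleton_parts (Q : Finpartition (insert a s)) (ha : a ∉ s) :
    (Q.avoidSingleton ha).parts = (Q.parts.image (· \ {a})).erase ∅ := rfl

lemma image_sdiff_singleton_parts {t : Finset ι} (Q : Finpartition t) (ha : a ∈ t) :
    Q.parts.image (· \ {a}) = insert ((Q.part a).erase a) (Q.parts.erase (Q.part a)) := by
  conv_lhs => rw [← insert_erase (Q.part_mem.mpr ha)]
  rw [image_insert, sdiff_singleton_eq_erase]
  congr 1
  refine (image_congr fun C hC => ?_).trans image_id
  rw [mem_coe, mem_erase] at hC
  rw [sdiff_singleton_eq_erase, id, erase_eq_self]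
  exact fun haC => hC.1 (Q.part_eq_of_mem hC.2 haC).symm

lemma erase_part_notMem_parts {t : Finset ι} (Q : Finpartition t) (a : ι) :
    (Q.part a).erase a ∉ Q.parts := by
  intro h
  obtain ⟨b, hb⟩ := Q.nonempty_of_mem_parts h
  have hat : a ∈ t := Q.part_nonempty.mp ⟨b, mem_of_mem_erase hb⟩
  have hself := Q.eq_of_mem_parts h (Q.part_mem.mpr hat) hb (mem_of_mem_erase hb)
  exact notMem_erase a _ (hself ▸ Q.mem_part hat)

lemma erase_empty_insert_erase (P : Finpartition s) {B : Finset ι}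
    (hB : B ∈ insert ∅ P.parts) : (insert B (P.parts.erase B)).erase ∅ = P.parts := by
  rcases mem_insert.mp hB with rfl | hB
  · rw [erase_insert (notMem_erase _ _), erase_eq_of_notMem P.empty_notMem_parts]
  · rw [insert_erase hB, erase_eq_of_notMem P.empty_notMem_parts]

lemma subset_of_mem_insert_empty (P : Finpartition s) {B : Finset ι}
    (hB : B ∈ insert ∅ P.parts) : B ⊆ s := by
  rcases mem_insert.mp hB with rfl | hB
  · exact empty_subset s
  · exact P.le hB

lemma insert_notMem_parts (P : Finpartition s) (ha : a ∉ s) (B : Finset ι) :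
    insert a B ∉ P.parts :=
  fun h => ha (P.le h (mem_insert_self a B))

lemma part_insertIntoPart (P : Finpartition s) (ha : a ∉ s) {B : Finset ι}
    (hB : B ∈ insert ∅ P.parts) : (P.insertIntoPart ha hB).part a = insert a B :=
  part_eq_of_mem _ (mem_insert_self _ _) (mem_insert_self a B)

theorem sum_insert_parts {M : Type*} [AddCommMonoid M] (ha : a ∉ s)
    (f : Finset (Finset ι) → M) :
    ∑ Q : Finpartition (insert a s), f Q.parts =
      ∑ P : Finpartition s, ∑ B ∈ insert ∅ P.parts,
        f (insert (insert a B) (P.parts.erase B)) := by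
  rw [sum_sigma']
  refine (sum_bij' (fun x hx => x.1.insertIntoPart ha (mem_sigma.mp hx).2)
    (fun Q _ => ⟨Q.avoidSingleton ha, (Q.part a).erase a⟩) (by simp) (fun Q _ => ?_)
    (fun x hx => ?_) (fun Q _ => ?_) (fun _ _ => rfl)).symm
  · rw [mem_sigma, avoidSingleton_parts, image_sdiff_singleton_parts Q (mem_insert_self a s)]
    refine ⟨mem_univ _, ?_⟩
    by_cases h : (Q.part a).erase a = ∅
    · exact h ▸ mem_insert_self _ _
    · exact mem_insert_of_mem (mem_erase.mpr ⟨h, mem_insert_self _ _⟩)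
  · obtain ⟨P, B⟩ := x
    have hB := (mem_sigma.mp hx).2
    have haB : a ∉ B := fun h => ha (P.subset_of_mem_insert_empty hB h)
    have herase : ((P.insertIntoPart ha hB).part a).erase a = B := by
      rw [part_insertIntoPart, erase_insert haB]
    refine Sigma.ext (Finpartition.ext ?_) (heq_of_eq herase)
    rw [avoidSingleton_parts, image_sdiff_singleton_parts _ (mem_insert_self a s), herase,
      part_insertIntoPart]
    change (insert B ((insert (insert a B) (P.parts.erase B)).erase (insert a B))).erase ∅ = _
    rw [erase_insert fun h => P.insert_notMem_parts ha B (mem_of_mem_erase h),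
      erase_empty_insert_erase P hB]
  · have hpart := Q.part_mem.mpr (mem_insert_self a s)
    apply Finpartition.ext
    change insert (insert a ((Q.part a).erase a))
      (((Q.parts.image (· \ {a})).erase ∅).erase ((Q.part a).erase a)) = Q.parts
    rw [image_sdiff_singleton_parts Q (mem_insert_self a s), erase_right_comm,
      erase_insert fun h => Q.erase_part_notMem_parts a (mem_of_mem_erase h),
      erase_eq_of_notMem fun h => Q.empty_notMem_parts (mem_of_mem_erase h),
      insert_erase (Q.mem_part (mem_insert_self a s)), insert_erase hpart]

end Finpartition

section FallingFactorials

variable {R : Type*} [CommRing R] {ι : Type*} [DecidableEq ι] {s : Finset ι} {a : ι} (x y : R)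

/-- A function of the set of blocks rather than of a `Finpartition`, so that it applies to the
blocks produced in `Finpartition.sum_insert_parts`. -/
noncomputable def fallingWeight (parts : Finset (Finset ι)) : R :=
  (∏ B ∈ parts, (descPochhammer R #B).eval x) * (descPochhammer R #parts).eval y

lemma fallingWeight_insert_singleton (P : Finpartition s) (ha : a ∉ s) :
    fallingWeight x y (insert {a} P.parts) = x * (y - #P.parts) * fallingWeight x y P.parts := by
  have hnew : {a} ∉ P.parts := P.insert_notMem_parts ha ∅
  rw [fallingWeight, fallingWeight, prod_insert hnew, card_insert_of_notMem hnew,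
    descPochhammer_succ_eval, card_singleton, descPochhammer_one, eval_X]
  ring

lemma fallingWeight_insert_insert_erase (P : Finpartition s) (ha : a ∉ s) {B : Finset ι}
    (hB : B ∈ P.parts) :
    fallingWeight x y (insert (insert a B) (P.parts.erase B)) =
      (x - #B) * fallingWeight x y P.parts := by
  have hnew : insert a B ∉ P.parts.erase B :=
    fun h => P.insert_notMem_parts ha B (mem_of_mem_erase h)
  rw [fallingWeight, fallingWeight, prod_insert hnew, card_insert_of_notMem hnew,
    card_erase_add_one hB, card_insert_of_notMem fun h => ha (P.le hB h),
    descPochhammer_succ_eval, ← mul_prod_erase P.parts _ hB]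
  ring

lemma sum_fallingWeight_insert (P : Finpartition s) (ha : a ∉ s) :
    ∑ B ∈ insert ∅ P.parts, fallingWeight x y (insert (insert a B) (P.parts.erase B)) =
      (x * y - #s) * fallingWeight x y P.parts := by
  rw [sum_insert P.empty_notMem_parts, insert_empty, erase_eq_of_notMem P.empty_notMem_parts,
    fallingWeight_insert_singleton x y P ha,
    sum_congr rfl fun B hB => fallingWeight_insert_insert_erase x y P ha hB, ← sum_mul,
    sum_sub_distrib, sum_const, nsmul_eq_mul, ← Nat.cast_sum, P.sum_card_parts]
  ring

theorem sum_fallingWeight_finpartition (s : Finset ι) :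
    ∑ P : Finpartition s, fallingWeight x y P.parts = (descPochhammer R #s).eval (x * y) := by
  induction s using Finset.induction_on with
  | empty =>
    have : Unique (Finpartition (∅ : Finset ι)) := inferInstanceAs (Unique (Finpartition ⊥))
    rw [Fintype.sum_unique, fallingWeight, Finpartition.parts_eq_empty_iff.mpr rfl]
    simp
  | insert a s ha ih =>
    rw [Finpartition.sum_insert_parts ha,
      sum_congr rfl fun P _ => sum_fallingWeight_insert x y P ha, ← mul_sum, ih,
      card_insert_of_notMem ha, descPochhammer_succ_eval]
    ring

end FallingFactorials

theorem stmt_18_general (α c : ℝ) (n : ℕ) :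
    ∑ P : Finpartition (Finset.univ : Finset (Fin n)),
        (∏ B ∈ P.parts, (descPochhammer ℝ B.card).eval α) *
          (descPochhammer ℝ P.parts.card).eval (-c) =
      (descPochhammer ℝ n).eval (-(α * c)) := by
  have h := sum_fallingWeight_finpartition α (-c) (univ : Finset (Fin n))
  rwa [card_univ, Fintype.card_fin, mul_neg] at h

/-- Charalambides' identity: summing over all set partitions `π` of `{1,…,n}`,
`∑_π (∏_{B ∈ π} α^{(|B|)}) (-c)^{(|π|)} = (-αc)^{(n)}`, where `x^{(m)}` denotes the
falling factorial; equivalently `∑ₖ C(n,k,α)(-c)^{(k)} = (-αc)^{(n)}` with the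
C-numbers `C(n,k,α) = ∑_{|π|=k} ∏_{B∈π} α^{(|B|)}`. -/
theorem stmt_18 (α c : ℝ) (n : ℕ) (hn : 1 ≤ n) :
    ∑ P : Finpartition (Finset.univ : Finset (Fin n)),
        (∏ B ∈ P.parts, (descPochhammer ℝ B.card).eval α) *
          (descPochhammer ℝ P.parts.card).eval (-c) =
      (descPochhammer ℝ n).eval (-(α * c)) :=
  stmt_18_general α c n
end

section
/- The weights identity: ((-1)^n / Γ(n)) · Σ over all set partitions π of {1,…,n} of [α^{-1} (-1)^{|π|} Γ(|π|) ∏_{B∈π} α^{(|B|)}] = 1, for any α ≠ 0 and n ≥ 1, where α^{(m)} is the falling factorial. -/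
/-!
Ordering the blocks of a set partition of `Fin n` by their maxima identifies set partitions with
Mathlib's `OrderedFinpartition n`. These are built recursively (`extendEquiv`): a partition of
`Fin (n + 1)` arises from one of `Fin n` with `L` blocks of sizes `s₁, …, s_L` either by adding
the new point as a singleton, which multiplies the weight `(-1)^L (L-1)! ∏ α^{(sᵢ)}` by `-L α`,
or by adding it to the `k`-th block, which multiplies it by `α - s_k`. Since `∑ s_k = n`, the
total factor is `-L α + L α - n = -n`, so the weighted sum `S n` satisfies `S (n + 1) = -n S n`
and `S 1 = -α`, whence `S n = (-1)^n (n-1)! α`.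
-/

open Finset

namespace Finset.Colex

variable {α : Type*} [LinearOrder α] {s t : Finset α}

lemma toColex_lt_toColex_of_max'_lt (hs : s.Nonempty) (ht : t.Nonempty)
    (h : s.max' hs < t.max' ht) : toColex s < toColex t :=
  toColex_lt_toColex_iff_exists_forall_lt.2
    ⟨t.max' ht, t.max'_mem ht, fun hmem => (s.le_max' _ hmem).not_gt h,
      fun b hb _ => (s.le_max' b hb).trans_lt h⟩

lemma max'_lt_max'_of_toColex_lt (hst : Disjoint s t) (hs : s.Nonempty) (ht : t.Nonempty)
    (h : toColex s < toColex t) : s.max' hs < t.max' ht := by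
  obtain ⟨a, hat, -, hlt⟩ := toColex_lt_toColex_iff_exists_forall_lt.1 h
  exact (s.max'_lt_iff hs).2 fun b hb => (hlt b hb (disjoint_left.1 hst hb)).trans_le
    (t.le_max' a hat)

end Finset.Colex

namespace OrderedFinpartition

variable {n : ℕ} (c : OrderedFinpartition n)

def part (i : Fin c.length) : Finset (Fin n) := univ.map ⟨c.emb i, (c.emb_strictMono i).injective⟩

@[simp] lemma mem_part {i : Fin c.length} {x : Fin n} : x ∈ c.part i ↔ ∃ a, c.emb i a = x := by
  simp [part]

lemma coe_part (i : Fin c.length) : (c.part i : Set (Fin n)) = Set.range (c.emb i) := by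
  ext; simp

lemma card_part (i : Fin c.length) : #(c.part i) = c.partSize i := by
  simp [part]

lemma part_nonempty (i : Fin c.length) : (c.part i).Nonempty :=
  ⟨c.emb i ⟨0, c.partSize_pos i⟩, by simp⟩

lemma max'_part (i : Fin c.length) :
    (c.part i).max' (c.part_nonempty i) =
      c.emb i ⟨c.partSize i - 1, Nat.sub_one_lt_of_lt (c.partSize_pos i)⟩ := by
  refine le_antisymm ((max'_le_iff _ _).2 fun x hx => ?_) (le_max' _ _ (by simp))
  obtain ⟨a, rfl⟩ := c.mem_part.1 hx
  exact (c.emb_strictMono i).monotone (Fin.le_def.2 (Nat.le_sub_one_of_lt a.2))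

lemma disjoint_part {i j : Fin c.length} (h : i ≠ j) : Disjoint (c.part i) (c.part j) := by
  rw [← disjoint_coe, coe_part, coe_part]
  exact c.disjoint (Set.mem_univ i) (Set.mem_univ j) h

lemma exists_mem_part (x : Fin n) : ∃ i, x ∈ c.part i := by
  simpa using c.cover x

lemma strictMono_toColex_part : StrictMono fun i => toColex (c.part i) := fun i j hij => by
  apply Colex.toColex_lt_toColex_of_max'_lt (c.part_nonempty i) (c.part_nonempty j)
  rw [max'_part, max'_part]
  exact c.parts_strictMono hij

lemma part_injective : Function.Injective c.part :=
  fun _ _ h => c.strictMono_toColex_part.injective (congrArg toColex h)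

def toFinpartition : Finpartition (univ : Finset (Fin n)) :=
  Finpartition.ofExistsUnique (univ.image c.part) (fun _ _ => subset_univ _)
    (fun x _ => by
      obtain ⟨i, hi⟩ := c.exists_mem_part x
      refine ⟨c.part i, ⟨mem_image_of_mem _ (mem_univ i), hi⟩, ?_⟩
      rintro _ ⟨hB, hxB⟩
      obtain ⟨j, -, rfl⟩ := mem_image.1 hB
      by_contra hji
      exact disjoint_left.1 (c.disjoint_part fun h => hji (congrArg c.part h)) hxB hi)
    (fun h => by
      obtain ⟨i, -, hi⟩ := mem_image.1 h
      exact (c.part_nonempty i).ne_empty hi)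

lemma parts_toFinpartition : c.toFinpartition.parts = univ.image c.part := rfl

lemma card_parts_toFinpartition : #c.toFinpartition.parts = c.length := by
  rw [parts_toFinpartition, card_image_of_injective _ c.part_injective, card_univ,
    Fintype.card_fin]

lemma prod_parts_toFinpartition {M : Type*} [CommMonoid M] (f : ℕ → M) :
    ∏ B ∈ c.toFinpartition.parts, f #B = ∏ i, f (c.partSize i) := by
  rw [parts_toFinpartition, prod_image fun i _ j _ h => c.part_injective h]
  simp only [card_part]

lemma ext_part {c c' : OrderedFinpartition n} (h : c.length = c'.length)
    (hpart : ∀ i, c.part i = c'.part (Fin.cast h i)) : c = c' := by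
  cases c with | mk L size _ emb emb_mono =>
  cases c' with | mk L' size' _ emb' emb_mono' =>
  obtain rfl : L = L' := h
  obtain rfl : size = size' := funext fun i => by
    simpa [card_part] using congrArg card (hpart i)
  obtain rfl : emb = emb' := funext fun i => (emb_mono i).range_inj (emb_mono' i) |>.1 <| by
    simpa [coe_part] using congrArg (fun B : Finset (Fin n) => (B : Set (Fin n))) (hpart i)
  rfl

section ofFinpartition

variable (P : Finpartition (univ : Finset (Fin n)))

-- For disjoint nonempty sets the colex order is the order of the maxima
-- (`Colex.max'_lt_max'_of_toColex_lt`), which is how an `OrderedFinpartition` orders its parts.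
noncomputable def sortedPart (i : Fin #P.parts) : Finset (Fin n) :=
  ofColex ((P.parts.map toColex.toEmbedding).orderEmbOfFin (card_map _) i)

lemma sortedPart_mem (i : Fin #P.parts) : sortedPart P i ∈ P.parts := by
  simpa [sortedPart] using (P.parts.map toColex.toEmbedding).orderEmbOfFin_mem (card_map _) i

lemma strictMono_toColex_sortedPart : StrictMono fun i => toColex (sortedPart P i) :=
  ((P.parts.map toColex.toEmbedding).orderEmbOfFin (card_map _)).strictMono

lemma exists_sortedPart_eq {B : Finset (Fin n)} (hB : B ∈ P.parts) : ∃ i, sortedPart P i = B := by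
  obtain ⟨i, hi⟩ : toColex B ∈ Set.range ((P.parts.map toColex.toEmbedding).orderEmbOfFin
      (card_map _)) := by
    rw [range_orderEmbOfFin]
    simpa using hB
  exact ⟨i, congrArg ofColex hi⟩

lemma sortedPart_nonempty (i : Fin #P.parts) : (sortedPart P i).Nonempty :=
  P.nonempty_of_mem_parts (sortedPart_mem P i)

lemma disjoint_sortedPart {i j : Fin #P.parts} (h : i ≠ j) :
    Disjoint (sortedPart P i) (sortedPart P j) :=
  P.disjoint (sortedPart_mem P i) (sortedPart_mem P j)
    ((strictMono_toColex_sortedPart P).injective.ne h ∘ congrArg toColex)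

noncomputable def ofFinpartition : OrderedFinpartition n where
  length := #P.parts
  partSize i := #(sortedPart P i)
  partSize_pos i := card_pos.2 (sortedPart_nonempty P i)
  emb i := (sortedPart P i).orderEmbOfFin rfl
  emb_strictMono i := ((sortedPart P i).orderEmbOfFin rfl).strictMono
  parts_strictMono i j hij := by
    simp only [orderEmbOfFin_last rfl (card_pos.2 (sortedPart_nonempty P _))]
    exact Colex.max'_lt_max'_of_toColex_lt (disjoint_sortedPart P hij.ne) _ _
      (strictMono_toColex_sortedPart P hij)
  disjoint i _ j _ hij := by
    simpa [Function.onFun, range_orderEmbOfFin] using disjoint_sortedPart P hij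
  cover x := by
    obtain ⟨i, hi⟩ := exists_sortedPart_eq P (P.part_mem.2 (mem_univ x))
    exact ⟨i, by simp [range_orderEmbOfFin, hi]⟩

lemma part_ofFinpartition (i : Fin (ofFinpartition P).length) :
    (ofFinpartition P).part i = sortedPart P i := by
  apply coe_injective
  rw [coe_part]
  exact range_orderEmbOfFin _ _

lemma sortedPart_toFinpartition (c : OrderedFinpartition n) (i : Fin #c.toFinpartition.parts) :
    sortedPart c.toFinpartition i = c.part (Fin.cast c.card_parts_toFinpartition i) := by
  have := orderEmbOfFin_unique (s := c.toFinpartition.parts.map toColex.toEmbedding) (card_map _)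
    (f := fun i => toColex (c.part (Fin.cast c.card_parts_toFinpartition i)))
    (fun j => mem_map_of_mem _ (mem_image_of_mem _ (mem_univ _)))
    (c.strictMono_toColex_part.comp (Fin.cast_strictMono _))
  exact congrArg ofColex (congrFun this i).symm

end ofFinpartition

noncomputable def equivFinpartition :
    OrderedFinpartition n ≃ Finpartition (univ : Finset (Fin n)) where
  toFun := toFinpartition
  invFun := ofFinpartition
  left_inv c := ext_part c.card_parts_toFinpartition fun i =>
    (part_ofFinpartition _ i).trans (sortedPart_toFinpartition c i)
  right_inv P := Finpartition.ext <| by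
    ext B
    simp only [parts_toFinpartition, mem_image, mem_univ, true_and]
    constructor
    · rintro ⟨i, rfl⟩
      rw [part_ofFinpartition]
      exact sortedPart_mem P i
    · exact fun hB =>
        (exists_sortedPart_eq P hB).imp fun i hi => (part_ofFinpartition P i).trans hi

lemma sum_partSize : ∑ i, c.partSize i = n := by
  simpa using Fintype.card_congr c.equivSigma

lemma prod_extendLeft_partSize {M : Type*} [CommMonoid M] (f : ℕ → M) :
    ∏ i, f (c.extendLeft.partSize i) = f 1 * ∏ i, f (c.partSize i) := by
  change ∏ i : Fin (c.length + 1), f ((Fin.cons 1 c.partSize : Fin (c.length + 1) → ℕ) i) = _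
  simp [Fin.prod_univ_succ]

lemma prod_extendMiddle_partSize {M : Type*} [CommMonoid M] (f : ℕ → M) (k : Fin c.length) :
    ∏ i, f ((c.extendMiddle k).partSize i) =
      f (c.partSize k + 1) * ∏ i ∈ univ.erase k, f (c.partSize i) := by
  change ∏ i : Fin c.length, f (Function.update c.partSize k (c.partSize k + 1) i) = _
  rw [← mul_prod_erase _ _ (mem_univ k), Function.update_self]
  exact congrArg _ (prod_congr rfl fun i hi => by rw [Function.update_of_ne (ne_of_mem_erase hi)])

section mixtureWeight

open scoped Nat

variable {R : Type*} [CommRing R]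

-- The summand of `stmt_19` without the factor `α⁻¹`, written with `Γ(L) = (L - 1)!`.
noncomputable def mixtureWeight (α : R) (c : OrderedFinpartition n) : R :=
  (-1) ^ c.length * ((c.length - 1)! : R) * ∏ i, (descPochhammer R (c.partSize i)).eval α

lemma mixtureWeight_extendLeft_add_sum_extendMiddle (α : R) (hn : 0 < n) :
    mixtureWeight α c.extendLeft + ∑ k, mixtureWeight α (c.extendMiddle k) =
      -n * mixtureWeight α c := by
  set L := c.length
  set Q := ∏ i, (descPochhammer R (c.partSize i)).eval α
  have hL : L ! = L * (L - 1)! := (Nat.mul_factorial_pred (c.length_pos hn).ne').symm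
  have hleft : mixtureWeight α c.extendLeft = -(L * α) * ((-1) ^ L * ((L - 1)! : R) * Q) := by
    rw [mixtureWeight, c.prod_extendLeft_partSize fun m => (descPochhammer R m).eval α,
      extendLeft_length, Nat.add_sub_cancel, hL]
    simp only [descPochhammer_one, Polynomial.eval_X, pow_succ, Nat.cast_mul]
    ring
  have hmiddle (k : Fin L) : mixtureWeight α (c.extendMiddle k) =
      (α - c.partSize k) * ((-1) ^ L * ((L - 1)! : R) * Q) := by
    have hQ : Q = (descPochhammer R (c.partSize k)).eval α *
        ∏ i ∈ univ.erase k, (descPochhammer R (c.partSize i)).eval α :=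
      (mul_prod_erase univ _ (mem_univ k)).symm
    rw [mixtureWeight, c.prod_extendMiddle_partSize (fun m => (descPochhammer R m).eval α) k,
      extendMiddle_length, descPochhammer_succ_eval, hQ]
    ring
  have hsum : ∑ k : Fin L, (α - c.partSize k) = L * α - n := by
    rw [sum_sub_distrib, ← Nat.cast_sum, sum_partSize]
    simp
  rw [hleft, Finset.sum_congr rfl fun k _ => hmiddle k, ← sum_mul, hsum, mixtureWeight]
  ring

lemma sum_mixtureWeight_succ (α : R) (hn : 0 < n) :
    ∑ c : OrderedFinpartition (n + 1), mixtureWeight α c =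
      -n * ∑ c : OrderedFinpartition n, mixtureWeight α c := by
  rw [← (extendEquiv n).sum_comp, Fintype.sum_sigma, mul_sum]
  refine sum_congr rfl fun c _ => ?_
  rw [Fintype.sum_option]
  exact c.mixtureWeight_extendLeft_add_sum_extendMiddle α hn

lemma sum_mixtureWeight (α : R) (hn : 0 < n) :
    ∑ c : OrderedFinpartition n, mixtureWeight α c = (-1) ^ n * ((n - 1)! : R) * α := by
  induction n, hn using Nat.le_induction with
  | base => simp [mixtureWeight]
  | succ n hn ih =>
    rw [sum_mixtureWeight_succ α hn, ih, Nat.add_sub_cancel,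
      ← Nat.mul_factorial_pred (show n ≠ 0 by omega)]
    push_cast
    ring

end mixtureWeight

end OrderedFinpartition

open scoped Nat in
theorem Finpartition.sum_neg_one_pow_mul_factorial_mul_prod_descPochhammer {R : Type*}
    [CommRing R] (α : R) {n : ℕ} (hn : 0 < n) :
    ∑ P : Finpartition (univ : Finset (Fin n)),
      (-1) ^ #P.parts * ((#P.parts - 1)! : R) * ∏ B ∈ P.parts, (descPochhammer R #B).eval α =
    (-1) ^ n * ((n - 1)! : R) * α := by
  rw [← OrderedFinpartition.sum_mixtureWeight α hn,
    ← OrderedFinpartition.equivFinpartition.sum_comp]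
  refine sum_congr rfl fun c _ => ?_
  simp only [OrderedFinpartition.equivFinpartition, Equiv.coe_fn_mk, c.card_parts_toFinpartition,
    c.prod_parts_toFinpartition fun m => (descPochhammer R m).eval α]
  rfl

open scoped Nat in
lemma Real.Gamma_natCast_eq_factorial_pred {k : ℕ} (hk : 0 < k) : Real.Gamma k = (k - 1)! := by
  rw [← Real.Gamma_nat_eq_factorial, Nat.cast_pred hk, sub_add_cancel]

/-- The mixture weights sum to one:
`((-1)^n / Γ(n)) ∑_π α⁻¹ (-1)^{|π|} Γ(|π|) ∏_{B∈π} α^{(|B|)} = 1`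
for `α ≠ 0` and `n ≥ 1`, the sum running over all set partitions of `{1,…,n}`,
where `α^{(m)}` is the falling factorial. -/
theorem stmt_19 (α : ℝ) (hα : α ≠ 0) (n : ℕ) (hn : 1 ≤ n) :
    (-1 : ℝ) ^ n / Real.Gamma n *
        ∑ P : Finpartition (Finset.univ : Finset (Fin n)),
          α⁻¹ * (-1 : ℝ) ^ P.parts.card * Real.Gamma P.parts.card *
            ∏ B ∈ P.parts, (descPochhammer ℝ B.card).eval α = 1 := by
  have huniv : (univ : Finset (Fin n)) ≠ ∅ := (univ_nonempty_iff.2 ⟨⟨0, hn⟩⟩).ne_empty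
  have hsum : ∑ P : Finpartition (univ : Finset (Fin n)),
      α⁻¹ * (-1 : ℝ) ^ #P.parts * Real.Gamma #P.parts *
        ∏ B ∈ P.parts, (descPochhammer ℝ #B).eval α =
      α⁻¹ * ((-1) ^ n * (n - 1).factorial * α) := by
    rw [← Finpartition.sum_neg_one_pow_mul_factorial_mul_prod_descPochhammer α hn, mul_sum]
    refine sum_congr rfl fun P _ => ?_
    rw [Real.Gamma_natCast_eq_factorial_pred (card_pos.2 (P.parts_nonempty huniv))]
    ring
  rw [hsum, Real.Gamma_natCast_eq_factorial_pred hn]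
  field_simp
  rw [← pow_mul, pow_mul', neg_one_sq, one_pow]
end
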